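/- arXiv:0801.1495 — 7 statements merged into one kernel-verified Lean document; each statement's English description precedes it below -/
import Mathlib

section
/- Let f : ℝ → ℝ be twice continuously differentiable with f''(u) > 0 for all u in an interval [uL, uU], and let u1, u2, u3 ∈ [uL, uU] with u1 ≤ u2 < u3 and u1 < u2 or u1 < u3 (so that both averages are defined, using the convention a(u,u)=u). Then a(u1, u2) < a(u1, u3); that is, the nonlinear average is strictly increasing in its second argument. -/
open Set

/-- The nonlinear average of a flux function `f` between two states `u1`, `u2`,
with the convention `a(u,u) = u`. -/
noncomputable def nlAvg (f : ℝ → ℝ) (u1 u2 : ℝ) : ℝ :=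
  if u1 = u2 then u1
  else ((deriv f u2 * u2 - f u2) - (deriv f u1 * u1 - f u1)) / (deriv f u2 - deriv f u1)

/-- For a strictly convex `C²` flux, the nonlinear average is strictly increasing
in its second argument. -/
theorem nlAvg_strictMono_right (f : ℝ → ℝ) (hf : ContDiff ℝ 2 f) (uL uU : ℝ)
    (hconv : ∀ u ∈ Icc uL uU, 0 < deriv (deriv f) u)
    (u1 u2 u3 : ℝ) (hu1 : u1 ∈ Icc uL uU) (hu2 : u2 ∈ Icc uL uU) (hu3 : u3 ∈ Icc uL uU)
    (h12 : u1 ≤ u2) (h23 : u2 < u3) (hne : u1 < u2 ∨ u1 < u3) :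
    nlAvg f u1 u2 < nlAvg f u1 u3 := by
  set F := deriv f with hF
  set W := deriv (deriv f) with hW
  have hf1 : ContDiff ℝ 1 F := by
    have h : ContDiff ℝ ((1:ℕ)+1) f := by exact_mod_cast hf
    exact_mod_cast (contDiff_succ_iff_deriv.mp h).2.2
  have hWc : Continuous W := hf1.continuous_deriv le_rfl
  have hFd : ∀ x, HasDerivAt F (W x) x := fun x =>
    ((hf1.differentiable one_ne_zero) x).hasDerivAt
  have hfd : ∀ x, HasDerivAt f (F x) x := fun x =>
    ((hf.differentiable two_ne_zero) x).hasDerivAt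
  -- integral representation of F b - F a
  have hFrepr : ∀ a b : ℝ, (∫ t in a..b, W t) = F b - F a := fun a b =>
    intervalIntegral.integral_eq_sub_of_hasDerivAt (fun x _ => hFd x)
      (hWc.intervalIntegrable a b)
  -- integral representation of g b - g a where g u = F u * u - f u
  have hGd : ∀ x : ℝ, HasDerivAt (fun u => F u * u - f u) (W x * x) x := by
    intro x
    have h := ((hFd x).mul (hasDerivAt_id x)).sub (hfd x)
    have h2 : W x * id x + F x * 1 - F x = W x * x := by simp only [id_eq, mul_one]; ring
    exact h2 ▸ h
  have hGrepr : ∀ a b : ℝ, (∫ t in a..b, W t * t) = (F b * b - f b) - (F a * a - f a) :=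
    fun a b =>
    intervalIntegral.integral_eq_sub_of_hasDerivAt (fun x _ => hGd x)
      ((hWc.mul continuous_id').intervalIntegrable a b)
  -- positivity lemma
  have key : ∀ (g : ℝ → ℝ) (a b : ℝ), Continuous g → a < b → a ∈ Icc uL uU →
      b ∈ Icc uL uU → (∀ x ∈ Ioo a b, 0 < g x) → 0 < ∫ t in a..b, g t := by
    intro g a b hg hab _ _ hpos
    exact intervalIntegral.intervalIntegral_pos_of_pos_on (hg.intervalIntegrable a b) hpos hab
  have hsub : ∀ a b : ℝ, a ∈ Icc uL uU → b ∈ Icc uL uU → Ioo a b ⊆ Icc uL uU := by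
    intro a b ha hb x hx
    exact ⟨ha.1.trans hx.1.le, hx.2.le.trans hb.2⟩
  -- three positivity facts
  have hlow : ∀ a b : ℝ, a < b → a ∈ Icc uL uU → b ∈ Icc uL uU →
      a * (∫ t in a..b, W t) < ∫ t in a..b, W t * t := by
    intro a b hab ha hb
    have h1 : (0:ℝ) < ∫ t in a..b, W t * (t - a) := by
      refine key _ a b (hWc.mul (continuous_id.sub continuous_const)) hab ha hb ?_
      intro x hx
      exact mul_pos (hconv x (hsub a b ha hb hx)) (sub_pos.mpr hx.1)
    have h2 : (∫ t in a..b, W t * (t - a))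
        = (∫ t in a..b, W t * t) - (∫ t in a..b, W t) * a := by
      simp only [mul_sub]
      rw [intervalIntegral.integral_sub (f := fun t => W t * t) (g := fun t => W t * a) ((hWc.mul continuous_id').intervalIntegrable a b)
        ((hWc.mul continuous_const).intervalIntegrable a b),
        intervalIntegral.integral_mul_const]
    rw [h2] at h1; linarith
  have hhigh : ∀ a b : ℝ, a < b → a ∈ Icc uL uU → b ∈ Icc uL uU →
      (∫ t in a..b, W t * t) < b * (∫ t in a..b, W t) := by
    intro a b hab ha hb
    have h1 : (0:ℝ) < ∫ t in a..b, W t * (b - t) := by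
      refine key _ a b (hWc.mul (continuous_const.sub continuous_id')) hab ha hb ?_
      intro x hx
      exact mul_pos (hconv x (hsub a b ha hb hx)) (sub_pos.mpr hx.2)
    have h2 : (∫ t in a..b, W t * (b - t))
        = (∫ t in a..b, W t) * b - (∫ t in a..b, W t * t) := by
      simp only [mul_sub]
      rw [intervalIntegral.integral_sub (f := fun t => W t * b) (g := fun t => W t * t) ((hWc.mul continuous_const).intervalIntegrable a b)
        ((hWc.mul continuous_id').intervalIntegrable a b),
        intervalIntegral.integral_mul_const]
    rw [h2] at h1; linarith
  have hWpos : ∀ a b : ℝ, a < b → a ∈ Icc uL uU → b ∈ Icc uL uU →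
      0 < ∫ t in a..b, W t := by
    intro a b hab ha hb
    exact key _ a b hWc hab ha hb (fun x hx => hconv x (hsub a b ha hb hx))
  have h13 : u1 < u3 := lt_of_le_of_lt h12 h23
  have hne13 : u1 ≠ u3 := ne_of_lt h13
  -- denominators
  have hI : 0 < F u3 - F u1 := by rw [← hFrepr]; exact hWpos u1 u3 h13 hu1 hu3
  have hK : 0 < F u3 - F u2 := by rw [← hFrepr]; exact hWpos u2 u3 h23 hu2 hu3
  have hN3low : u1 * (F u3 - F u1) < (F u3 * u3 - f u3) - (F u1 * u1 - f u1) := by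
    rw [← hFrepr, ← hGrepr]; exact hlow u1 u3 h13 hu1 hu3
  rcases eq_or_lt_of_le h12 with heq | hlt12
  · -- u1 = u2
    subst heq
    rw [nlAvg, nlAvg, if_pos rfl, if_neg hne13]
    rw [lt_div_iff₀ hI]
    linarith
  · -- u1 < u2
    have hne12 : u1 ≠ u2 := ne_of_lt hlt12
    rw [nlAvg, nlAvg, if_neg hne12, if_neg hne13]
    have hJ : 0 < F u2 - F u1 := by rw [← hFrepr]; exact hWpos u1 u2 hlt12 hu1 hu2
    have hN2high : (F u2 * u2 - f u2) - (F u1 * u1 - f u1) < u2 * (F u2 - F u1) := by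
      rw [← hFrepr, ← hGrepr]; exact hhigh u1 u2 hlt12 hu1 hu2
    have hMlow : u2 * (F u3 - F u2) < (F u3 * u3 - f u3) - (F u2 * u2 - f u2) := by
      rw [← hFrepr, ← hGrepr]; exact hlow u2 u3 h23 hu2 hu3
    rw [div_lt_div_iff₀ hJ hI]
    nlinarith [mul_pos hJ hK, hN2high, hMlow, hJ, hK]
end

section
/- Let f : ℝ → ℝ be twice continuously differentiable with f''(u) > 0 for all u in an interval [uL, uU], and let u0, u1, u2 ∈ [uL, uU] with u0 < u1 ≤ u2 and u1 < u2 or u0 < u2 (so that both averages are defined, using the convention a(u,u)=u). Then a(u0, u2) < a(u1, u2); that is, the nonlinear average is strictly increasing in its first argument. -/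
open Set

lemma nlAvg_key (f : ℝ → ℝ) (hf : ContDiff ℝ 2 f) (uL uU : ℝ)
    (hconv : ∀ u ∈ Icc uL uU, 0 < deriv (deriv f) u)
    (a b : ℝ) (ha : a ∈ Icc uL uU) (hb : b ∈ Icc uL uU) (hab : a < b) :
    deriv f a < deriv f b ∧
    a * (deriv f b - deriv f a) < (deriv f b * b - f b) - (deriv f a * a - f a) ∧
    (deriv f b * b - f b) - (deriv f a * a - f a) < b * (deriv f b - deriv f a) := by
  have hg1 : ContDiff ℝ 1 (deriv f) := (contDiff_succ_iff_deriv.mp (by exact_mod_cast hf)).2.2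
  have hgd : Differentiable ℝ (deriv f) := hg1.differentiable one_ne_zero
  have hfd : Differentiable ℝ f := hf.differentiable two_ne_zero
  have hsub : Icc a b ⊆ Icc uL uU := Icc_subset_Icc ha.1 hb.2
  have hmono : StrictMonoOn (deriv f) (Icc uL uU) :=
    strictMonoOn_of_deriv_pos (convex_Icc _ _) hg1.continuous.continuousOn
      (fun x hx => hconv x (interior_subset hx))
  refine ⟨hmono ha hb hab, ?_, ?_⟩
  · set h : ℝ → ℝ := fun x => (deriv f x * x - f x) - a * deriv f x with hdef
    have hh : ∀ x, HasDerivAt h (deriv (deriv f) x * (x - a)) x := by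
      intro x
      have hg'x : HasDerivAt (deriv f) (deriv (deriv f) x) x := (hgd x).hasDerivAt
      have H := ((hg'x.mul (hasDerivAt_id x)).sub (hfd x).hasDerivAt).sub (hg'x.const_mul a)
      refine H.congr_deriv ?_
      simp only [id]
      ring
    have hc : Continuous h := (((hgd.mul differentiable_id).sub hfd).sub
      (hgd.const_mul a)).continuous
    have hmono2 : StrictMonoOn h (Icc a b) := by
      apply strictMonoOn_of_deriv_pos (convex_Icc a b) hc.continuousOn
      intro x hx
      rw [interior_Icc] at hx
      rw [(hh x).deriv]
      have hxI : x ∈ Icc uL uU := hsub ⟨hx.1.le, hx.2.le⟩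
      have := hconv x hxI
      nlinarith [hx.1]
    have := hmono2 (left_mem_Icc.mpr hab.le) (right_mem_Icc.mpr hab.le) hab
    simp only [hdef] at this
    nlinarith [this]
  · set h : ℝ → ℝ := fun x => b * deriv f x - (deriv f x * x - f x) with hdef
    have hh : ∀ x, HasDerivAt h (deriv (deriv f) x * (b - x)) x := by
      intro x
      have hg'x : HasDerivAt (deriv f) (deriv (deriv f) x) x := (hgd x).hasDerivAt
      have H := (hg'x.const_mul b).sub ((hg'x.mul (hasDerivAt_id x)).sub (hfd x).hasDerivAt)
      refine H.congr_deriv ?_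
      simp only [id]
      ring
    have hc : Continuous h := ((hgd.const_mul b).sub
      ((hgd.mul differentiable_id).sub hfd)).continuous
    have hmono2 : StrictMonoOn h (Icc a b) := by
      apply strictMonoOn_of_deriv_pos (convex_Icc a b) hc.continuousOn
      intro x hx
      rw [interior_Icc] at hx
      rw [(hh x).deriv]
      have hxI : x ∈ Icc uL uU := hsub ⟨hx.1.le, hx.2.le⟩
      have := hconv x hxI
      nlinarith [hx.2]
    have := hmono2 (left_mem_Icc.mpr hab.le) (right_mem_Icc.mpr hab.le) hab
    simp only [hdef] at this
    nlinarith [this]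

/-- For a strictly convex `C²` flux, the nonlinear average is strictly increasing
in its first argument. -/
theorem nlAvg_strictMono_left (f : ℝ → ℝ) (hf : ContDiff ℝ 2 f) (uL uU : ℝ)
    (hconv : ∀ u ∈ Icc uL uU, 0 < deriv (deriv f) u)
    (u0 u1 u2 : ℝ) (hu0 : u0 ∈ Icc uL uU) (hu1 : u1 ∈ Icc uL uU) (hu2 : u2 ∈ Icc uL uU)
    (h01 : u0 < u1) (h12 : u1 ≤ u2) (hne : u1 < u2 ∨ u0 < u2) :
    nlAvg f u0 u2 < nlAvg f u1 u2 := by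
  rcases eq_or_lt_of_le h12 with heq | hlt
  · subst heq
    have h02 : u0 < u1 := h01
    obtain ⟨hD, hlo, hhi⟩ := nlAvg_key f hf uL uU hconv u0 u1 hu0 hu1 h02
    rw [nlAvg, nlAvg, if_neg (ne_of_lt h02), if_pos rfl]
    rw [div_lt_iff₀ (by linarith)]
    linarith
  · obtain ⟨hD02, hlo02, hhi02⟩ := nlAvg_key f hf uL uU hconv u0 u2 hu0 hu2 (lt_trans h01 hlt)
    obtain ⟨hD12, hlo12, hhi12⟩ := nlAvg_key f hf uL uU hconv u1 u2 hu1 hu2 hlt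
    obtain ⟨hD01, hlo01, hhi01⟩ := nlAvg_key f hf uL uU hconv u0 u1 hu0 hu1 h01
    rw [nlAvg, nlAvg, if_neg (ne_of_lt (lt_trans h01 hlt)), if_neg (ne_of_lt hlt)]
    rw [div_lt_div_iff₀ (by linarith) (by linarith)]
    nlinarith [hhi01, hlo12, sub_pos.mpr hD01, sub_pos.mpr hD12]
end

section
/- Let f : ℝ → ℝ be twice continuously differentiable with f''(u) > 0 on [u1, u2], where u1 < u2, and let x1 < x2 be real numbers. Define the interpolation curve x(u) := x1 + ((f'(u) − f'(u1))/(f'(u2) − f'(u1)))·(x2 − x1) for u ∈ [u1, u2]. Then the area under the graph of the interpolation satisfies ∫_{u1}^{u2} u·x'(u) du = (x2 − x1)·a(u1,u2). -/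
open Set intervalIntegral

/-- The area under the interpolation curve
`x(u) = x1 + ((f'(u) − f'(u1))/(f'(u2) − f'(u1)))·(x2 − x1)` between two particles
equals `(x2 − x1)·a(u1,u2)`. -/
theorem area_under_interpolation (f : ℝ → ℝ) (hf : ContDiff ℝ 2 f)
    (u1 u2 : ℝ) (h12 : u1 < u2)
    (hconv : ∀ u ∈ Icc u1 u2, 0 < deriv (deriv f) u)
    (x1 x2 : ℝ) (hx : x1 < x2) :
    ∫ u in u1..u2,
        u * deriv (fun w => x1 + ((deriv f w - deriv f u1) / (deriv f u2 - deriv f u1)) * (x2 - x1)) u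
      = (x2 - x1) * nlAvg f u1 u2 := by
  have hf' : ContDiff ℝ 1 (deriv f) := (contDiff_succ_iff_deriv.mp (hf.of_le (by norm_num : ((1:WithTop ℕ∞)+1) ≤ 2))).2.2
  have hdf : ∀ u : ℝ, HasDerivAt (deriv f) (deriv (deriv f) u) u := fun u =>
    ((hf'.differentiable one_ne_zero) u).hasDerivAt
  have hcont : Continuous (deriv (deriv f)) := hf'.continuous_deriv le_rfl
  -- f' strictly monotone on Icc
  have hmono : StrictMonoOn (deriv f) (Icc u1 u2) := by
    apply strictMonoOn_of_hasDerivWithinAt_pos (convex_Icc u1 u2)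
      (hf'.continuous.continuousOn)
      (fun u hu => ((hdf u).hasDerivWithinAt)) ?_
    intro u hu
    exact hconv u (Set.mem_of_mem_of_subset hu interior_subset)
  have hlt : deriv f u1 < deriv f u2 :=
    hmono (Set.left_mem_Icc.2 h12.le) (Set.right_mem_Icc.2 h12.le) h12
  set c := deriv f u2 - deriv f u1 with hc
  have hcne : c ≠ 0 := sub_ne_zero.2 (ne_of_gt hlt)
  set k := x2 - x1 with hk
  -- rewrite the integrand
  have hderiv : ∀ u : ℝ,
      deriv (fun w => x1 + ((deriv f w - deriv f u1) / c) * k) u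
        = deriv (deriv f) u * (k / c) := by
    intro u
    have h1 : HasDerivAt (fun w => x1 + ((deriv f w - deriv f u1) / c) * k)
        (deriv (deriv f) u * (k / c)) u := by
      have := (((hdf u).sub_const (deriv f u1)).div_const c).mul_const k
      refine (this.const_add x1).congr_deriv ?_
      ring
    exact h1.deriv
  have hintg : ∀ u : ℝ, HasDerivAt (fun u => u * deriv f u - f u)
      (u * deriv (deriv f) u) u := by
    intro u
    have hfd : HasDerivAt f (deriv f u) u :=
      ((hf.differentiable (by norm_num)) u).hasDerivAt
    have := ((hasDerivAt_id u).mul (hdf u)).sub hfd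
    refine this.congr_deriv ?_
    simp only [id]; ring
  have hint : ∫ u in u1..u2, u * deriv (deriv f) u
      = (u2 * deriv f u2 - f u2) - (u1 * deriv f u1 - f u1) := by
    apply intervalIntegral.integral_eq_sub_of_hasDerivAt
    · intro u hu; exact hintg u
    · exact (continuous_id.mul hcont).intervalIntegrable u1 u2
  calc ∫ u in u1..u2,
        u * deriv (fun w => x1 + ((deriv f w - deriv f u1) / c) * k) u
      = ∫ u in u1..u2, (u * deriv (deriv f) u) * (k / c) := by
        apply intervalIntegral.integral_congr
        intro u _
        show u * deriv (fun w => x1 + ((deriv f w - deriv f u1) / c) * k) u = _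
        rw [hderiv u]; ring
    _ = (∫ u in u1..u2, u * deriv (deriv f) u) * (k / c) := by
        rw [intervalIntegral.integral_mul_const]
    _ = ((u2 * deriv f u2 - f u2) - (u1 * deriv f u1 - f u1)) * (k / c) := by rw [hint]
    _ = k * nlAvg f u1 u2 := by
        rw [nlAvg, if_neg (ne_of_lt h12)]
        simp only [hc]
        ring
end

section
/- Let f : ℝ → ℝ be twice continuously differentiable with f''(u) > 0 on an interval J, let u1, u4 ∈ J, and let x1 < x23 < x4 be real numbers. Then the function B : J → ℝ defined by B(u) := (x23 − x1)·a(u1, u) + (x4 − x23)·a(u, u4) is strictly increasing on J. In particular, the merged value u23 satisfying the area condition B(u23) = A for a given area A is unique. -/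
open Set

lemma nlAvg_symm (f : ℝ → ℝ) (p q : ℝ) : nlAvg f p q = nlAvg f q p := by
  rcases eq_or_ne p q with h | h
  · simp [nlAvg, h]
  · rw [nlAvg, nlAvg, if_neg h, if_neg (Ne.symm h)]
    rw [show ((deriv f p * p - f p) - (deriv f q * q - f q))
        = -(((deriv f q * q - f q) - (deriv f p * p - f p))) by ring,
      show (deriv f p - deriv f q) = -((deriv f q - deriv f p)) by ring,
      neg_div_neg_eq]

section Aux

variable {f : ℝ → ℝ} (hf : ContDiff ℝ 2 f) {uL uU : ℝ}
  (hconv : ∀ u ∈ Icc uL uU, 0 < deriv (deriv f) u)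

include hf in
lemma aux_diff : Differentiable ℝ f ∧ Differentiable ℝ (deriv f) := by
  have h2 : ContDiff ℝ ((1:ℕ) + 1) f := by norm_num; exact hf
  have := contDiff_succ_iff_deriv.mp h2
  exact ⟨this.1, this.2.2.differentiable (by norm_num)⟩

include hf hconv in
lemma deriv_strictMono : StrictMonoOn (deriv f) (Icc uL uU) := by
  apply strictMonoOn_of_deriv_pos (convex_Icc uL uU)
    ((aux_diff hf).2.continuous.continuousOn)
  intro x hx
  rw [interior_Icc] at hx
  exact hconv x ⟨hx.1.le, hx.2.le⟩

include hf hconv in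
lemma nlAvg_key_s10 {p q : ℝ} (hp : p ∈ Icc uL uU) (hq : q ∈ Icc uL uU) (hpq : p < q) :
    nlAvg f p q ∈ Ioo p q ∧
      (deriv f q * q - f q) - (deriv f p * p - f p)
        = (deriv f q - deriv f p) * nlAvg f p q := by
  obtain ⟨hfd, hgd⟩ := aux_diff hf
  have hIcc : Icc p q ⊆ Icc uL uU := Icc_subset_Icc hp.1 hq.2
  have hmvt := exists_ratio_hasDerivAt_eq_ratio_slope
    (fun x => deriv f x * x - f x) (fun x => deriv (deriv f) x * x) hpq
    (((hgd.continuous.mul continuous_id).sub hfd.continuous).continuousOn)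
    (fun x _ => by
      have h1 : HasDerivAt (fun y => deriv f y * y)
          (deriv (deriv f) x * x + deriv f x * 1) x :=
        (hgd x).hasDerivAt.mul (hasDerivAt_id x)
      have h2 : HasDerivAt (fun y => deriv f y * y - f y)
          (deriv (deriv f) x * x + deriv f x * 1 - deriv f x) x :=
        h1.sub (hfd x).hasDerivAt
      convert h2 using 1; ring)
    (deriv f) (deriv (deriv f)) (hgd.continuous.continuousOn)
    (fun x _ => (hgd x).hasDerivAt)
  obtain ⟨c, hc, hceq⟩ := hmvt
  have hcI : c ∈ Icc uL uU := hIcc ⟨hc.1.le, hc.2.le⟩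
  have hgc : 0 < deriv (deriv f) c := hconv c hcI
  have hgpq : deriv f p < deriv f q := deriv_strictMono hf hconv hp hq hpq
  have hkey : (deriv f q * q - f q) - (deriv f p * p - f p)
      = (deriv f q - deriv f p) * c := by
    apply mul_right_cancel₀ hgc.ne'
    linear_combination -hceq
  have havg : nlAvg f p q = c := by
    rw [nlAvg, if_neg hpq.ne, div_eq_iff (by linarith : deriv f q - deriv f p ≠ 0)]
    linear_combination hkey
  exact ⟨havg ▸ hc, by rw [havg]; exact hkey⟩

include hf hconv in
lemma nlAvg_mono {p : ℝ} (hpI : p ∈ Icc uL uU) :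
    ∀ v ∈ Icc uL uU, ∀ w ∈ Icc uL uU, v < w → nlAvg f p v < nlAvg f p w := by
  intro v hv w hw hvw
  have hmono := deriv_strictMono hf hconv
  rcases lt_trichotomy p v with hpv | heq | hvp
  · -- p < v < w
    obtain ⟨hA1, hE1⟩ := nlAvg_key_s10 hf hconv hpI hv hpv
    obtain ⟨hA2, hE2⟩ := nlAvg_key_s10 hf hconv hpI hw (hpv.trans hvw)
    obtain ⟨hA3, hE3⟩ := nlAvg_key_s10 hf hconv hv hw hvw
    have hd1 : 0 < deriv f v - deriv f p := sub_pos.mpr (hmono hpI hv hpv)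
    have hd2 : 0 < deriv f w - deriv f v := sub_pos.mpr (hmono hv hw hvw)
    have hlt : nlAvg f p v < nlAvg f v w := hA1.2.trans hA3.1
    nlinarith [mul_lt_mul_of_pos_left hlt hd2]
  · -- p = v
    subst heq
    have hdiag : nlAvg f p p = p := by simp [nlAvg]
    rw [hdiag]
    exact (nlAvg_key_s10 hf hconv hpI hw hvw).1.1
  · rcases lt_trichotomy p w with hpw | heq | hwp
    · -- v < p < w
      have hL : nlAvg f p v < p := by
        rw [nlAvg_symm]
        exact (nlAvg_key_s10 hf hconv hv hpI hvp).1.2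
      exact hL.trans (nlAvg_key_s10 hf hconv hpI hw hpw).1.1
    · -- p = w
      subst heq
      have hdiag : nlAvg f p p = p := by simp [nlAvg]
      rw [hdiag, nlAvg_symm]
      exact (nlAvg_key_s10 hf hconv hv hpI hvw).1.2
    · -- v < w < p
      obtain ⟨hA1, hE1⟩ := nlAvg_key_s10 hf hconv hv hpI hvp
      obtain ⟨hA2, hE2⟩ := nlAvg_key_s10 hf hconv hw hpI hwp
      obtain ⟨hA3, hE3⟩ := nlAvg_key_s10 hf hconv hv hw hvw
      have hd1 : 0 < deriv f p - deriv f v := sub_pos.mpr (hmono hv hpI hvp)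
      have hd2 : 0 < deriv f w - deriv f v := sub_pos.mpr (hmono hv hw hvw)
      have hlt : nlAvg f v w < nlAvg f w p := hA3.2.trans hA2.1
      rw [nlAvg_symm f p v, nlAvg_symm f p w]
      nlinarith [mul_lt_mul_of_pos_left hlt hd2]

end Aux

/-- For a strictly convex `C²` flux, the function
`B(u) = (x23 − x1)·a(u1, u) + (x4 − x23)·a(u, u4)` is strictly increasing; in
particular the merged value satisfying the area condition `B(u23) = A` is unique. -/
theorem merge_value_unique (f : ℝ → ℝ) (hf : ContDiff ℝ 2 f) (uL uU : ℝ)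
    (hconv : ∀ u ∈ Icc uL uU, 0 < deriv (deriv f) u)
    (u1 u4 : ℝ) (hu1 : u1 ∈ Icc uL uU) (hu4 : u4 ∈ Icc uL uU)
    (x1 x23 x4 : ℝ) (h1 : x1 < x23) (h2 : x23 < x4) :
    StrictMonoOn (fun u => (x23 - x1) * nlAvg f u1 u + (x4 - x23) * nlAvg f u u4)
        (Icc uL uU) ∧
    ∀ A : ℝ, ∀ v ∈ Icc uL uU, ∀ w ∈ Icc uL uU,
      (x23 - x1) * nlAvg f u1 v + (x4 - x23) * nlAvg f v u4 = A →
      (x23 - x1) * nlAvg f u1 w + (x4 - x23) * nlAvg f w u4 = A → v = w := by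
  have hmono : StrictMonoOn
      (fun u => (x23 - x1) * nlAvg f u1 u + (x4 - x23) * nlAvg f u u4)
      (Icc uL uU) := by
    intro v hv w hw hvw
    have hA := nlAvg_mono hf hconv hu1 v hv w hw hvw
    have hB : nlAvg f v u4 < nlAvg f w u4 := by
      rw [nlAvg_symm f v u4, nlAvg_symm f w u4]
      exact nlAvg_mono hf hconv hu4 v hv w hw hvw
    have hc1 : (0:ℝ) < x23 - x1 := by linarith
    have hc2 : (0:ℝ) < x4 - x23 := by linarith
    exact add_lt_add (mul_lt_mul_of_pos_left hA hc1) (mul_lt_mul_of_pos_left hB hc2)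
  refine ⟨hmono, ?_⟩
  intro A v hv w hw hveq hweq
  exact hmono.injOn hv hw (by simpa using hveq.trans hweq.symm)
end

section
/- Let f : ℝ → ℝ be twice continuously differentiable with f''(u) > 0 on [u2, u3], where u2 < u3, and let x2 < x23 < x3 be real numbers. Then there exists a unique w ∈ (u2, u3) satisfying the insertion area condition (x23 − x2)·a(u2, w) + (x3 − x23)·a(w, u3) = (x3 − x2)·a(u2, u3). -/
open Set Filter Topology

/-- Existence and uniqueness of the inserted value: a new particle at position
`x23` strictly between `x2` and `x3` has a unique value `w ∈ (u2, u3)` that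
preserves the area between the two particles. -/
theorem insert_value_exists_unique (f : ℝ → ℝ) (hf : ContDiff ℝ 2 f)
    (u2 u3 : ℝ) (h23 : u2 < u3)
    (hconv : ∀ u ∈ Icc u2 u3, 0 < deriv (deriv f) u)
    (x2 x23 x3 : ℝ) (hx1 : x2 < x23) (hx2 : x23 < x3) :
    ∃! w : ℝ, w ∈ Ioo u2 u3 ∧
      (x23 - x2) * nlAvg f u2 w + (x3 - x23) * nlAvg f w u3
        = (x3 - x2) * nlAvg f u2 u3 := by
  classical
  have hf' : Differentiable ℝ f := hf.differentiable (by norm_num)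
  have hf2 : ContDiff ℝ 1 (deriv f) := by
    have h11 : ContDiff ℝ (1+1) f := by exact_mod_cast hf
    exact (contDiff_succ_iff_deriv.mp h11).2.2
  have hDdiff : Differentiable ℝ (deriv f) := hf2.differentiable (by norm_num)
  set D : ℝ → ℝ := deriv f with hDdef
  have hDc : Continuous D := hDdiff.continuous
  have hfc : Continuous f := hf'.continuous
  -- D is strictly monotone on [u2,u3]
  have hmono : StrictMonoOn D (Icc u2 u3) := by
    apply strictMonoOn_of_deriv_pos (convex_Icc u2 u3) hDc.continuousOn
    intro x hx
    rw [interior_Icc] at hx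
    exact hconv x (Ioo_subset_Icc_self hx)
  -- tangent line inequalities from MVT
  have tangent : ∀ p q : ℝ, u2 ≤ p → p < q → q ≤ u3 →
      D p * (q - p) < f q - f p ∧ f q - f p < D q * (q - p) := by
    intro p q hp hpq hq
    obtain ⟨c, hc, hc'⟩ := exists_deriv_eq_slope f hpq hfc.continuousOn
      (hf'.differentiableOn)
    have hcI : c ∈ Icc u2 u3 := ⟨hp.trans hc.1.le, hc.2.le.trans hq⟩
    have hcp : D p < D c := hmono ⟨hp, hpq.le.trans hq⟩ hcI hc.1
    have hcq : D c < D q := hmono hcI ⟨hp.trans hpq.le, hq⟩ hc.2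
    have hpos : (0:ℝ) < q - p := sub_pos.mpr hpq
    have heq : f q - f p = D c * (q - p) := by
      rw [hDdef, hc']; field_simp
    constructor
    · rw [heq]; exact mul_lt_mul_of_pos_right hcp hpos
    · rw [heq]; exact mul_lt_mul_of_pos_right hcq hpos
  set A : ℝ → ℝ → ℝ :=
    fun p q => (D q * q - f q - (D p * p - f p)) / (D q - D p) with hA
  have hnl : ∀ p q : ℝ, p ≠ q → nlAvg f p q = A p q := by
    intro p q h
    simp only [nlAvg, if_neg h, hA, hDdef]
  have hden : ∀ p q : ℝ, u2 ≤ p → p < q → q ≤ u3 → 0 < D q - D p := by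
    intro p q hp hpq hq
    have := hmono ⟨hp, hpq.le.trans hq⟩ ⟨hp.trans hpq.le, hq⟩ hpq
    linarith
  have hbounds : ∀ p q : ℝ, u2 ≤ p → p < q → q ≤ u3 → p < A p q ∧ A p q < q := by
    intro p q hp hpq hq
    have hd := hden p q hp hpq hq
    have ht := tangent p q hp hpq hq
    constructor
    · rw [hA, lt_div_iff₀ hd]; nlinarith [ht.2]
    · rw [hA, div_lt_iff₀ hd]; nlinarith [ht.1]
  -- mediant monotonicity
  have hmed : ∀ p q r : ℝ, u2 ≤ p → p < q → q < r → r ≤ u3 →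
      A p q < A p r ∧ A p r < A q r := by
    intro p q r hp hpq hqr hr
    have hqle : q ≤ u3 := (hqr.trans_le hr).le
    have hple : u2 ≤ q := hp.trans hpq.le
    have d1 := hden p q hp hpq hqle
    have d2 := hden q r hple hqr hr
    have d3 := hden p r hp (hpq.trans hqr) hr
    have h1 := (hbounds p q hp hpq hqle).2
    have h2 := (hbounds q r hple hqr hr).1
    rw [hA] at h1 h2
    have k1 : D q * q - f q - (D p * p - f p) < q * (D q - D p) :=
      (div_lt_iff₀ d1).mp h1
    have k2 : q * (D r - D q) < D r * r - f r - (D q * q - f q) :=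
      (lt_div_iff₀ d2).mp h2
    have k1' := mul_lt_mul_of_pos_right k1 d2
    have k2' := mul_lt_mul_of_pos_right k2 d1
    constructor
    · rw [hA, div_lt_div_iff₀ d1 d3]; nlinarith [k1', k2']
    · rw [hA, div_lt_div_iff₀ d3 d2]; nlinarith [k1', k2']
  set g : ℝ → ℝ := fun w => (x23 - x2) * A u2 w + (x3 - x23) * A w u3 with hg
  set T : ℝ := (x3 - x2) * A u2 u3 with hT
  have c1 : (0:ℝ) < x23 - x2 := sub_pos.mpr hx1
  have c2 : (0:ℝ) < x3 - x23 := sub_pos.mpr hx2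
  have gmono : ∀ a ∈ Ioo u2 u3, ∀ b ∈ Ioo u2 u3, a < b → g a < g b := by
    intro a ha b hb hab
    have h1 := (hmed u2 a b le_rfl ha.1 hab hb.2.le).1
    have h2 := (hmed a b u3 ha.1.le hab hb.2 le_rfl).2
    simp only [hg]
    nlinarith [h1, h2]
  have hAu := hbounds u2 u3 le_rfl h23 le_rfl
  -- continuity of the two pieces away from the degenerate points
  have hcont1 : ∀ w : ℝ, D u2 < D w → ContinuousAt (fun v => A u2 v) w := by
    intro w hw
    simp only [hA]
    exact ContinuousAt.div
      (((hDc.continuousAt.mul continuousAt_id).sub hfc.continuousAt).sub continuousAt_const)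
      (hDc.continuousAt.sub continuousAt_const) (by linarith)
  have hcont2 : ∀ w : ℝ, D w < D u3 → ContinuousAt (fun v => A v u3) w := by
    intro w hw
    simp only [hA]
    exact ContinuousAt.div
      (continuousAt_const.sub ((hDc.continuousAt.mul continuousAt_id).sub hfc.continuousAt))
      (continuousAt_const.sub hDc.continuousAt) (by linarith)
  have hIooEv1 : ∀ᶠ w in 𝓝[>] u2, w ∈ Ioo u2 u3 :=
    eventually_of_mem (Ioo_mem_nhdsGT_of_mem ⟨le_refl u2, h23⟩) (fun x hx => hx)
  have hIooEv2 : ∀ᶠ w in 𝓝[<] u3, w ∈ Ioo u2 u3 :=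
    eventually_of_mem (Ioo_mem_nhdsLT_of_mem ⟨h23, le_refl u3⟩) (fun x hx => hx)
  -- limit of g at u2 from the right
  have lim1 : Tendsto g (𝓝[>] u2) (𝓝 ((x23 - x2) * u2 + (x3 - x23) * A u2 u3)) := by
    apply Tendsto.add
    · apply Tendsto.const_mul
      apply tendsto_of_tendsto_of_tendsto_of_le_of_le' tendsto_const_nhds
        ((continuous_id.tendsto u2).mono_left nhdsWithin_le_nhds)
      · exact hIooEv1.mono (fun w hw => (hbounds u2 w le_rfl hw.1 hw.2.le).1.le)
      · exact hIooEv1.mono (fun w hw => (hbounds u2 w le_rfl hw.1 hw.2.le).2.le)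
    · apply Tendsto.const_mul
      have h := hden u2 u3 le_rfl h23 le_rfl
      exact ((hcont2 u2 (by linarith)).continuousWithinAt)
  have lim2 : Tendsto g (𝓝[<] u3) (𝓝 ((x23 - x2) * A u2 u3 + (x3 - x23) * u3)) := by
    apply Tendsto.add
    · apply Tendsto.const_mul
      have h := hden u2 u3 le_rfl h23 le_rfl
      exact ((hcont1 u3 (by linarith)).continuousWithinAt)
    · apply Tendsto.const_mul
      apply tendsto_of_tendsto_of_tendsto_of_le_of_le'
        ((continuous_id.tendsto u3).mono_left nhdsWithin_le_nhds) tendsto_const_nhds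
      · exact hIooEv2.mono (fun w hw => (hbounds w u3 hw.1.le hw.2 le_rfl).1.le)
      · exact hIooEv2.mono (fun w hw => (hbounds w u3 hw.1.le hw.2 le_rfl).2.le)
  have hL1 : (x23 - x2) * u2 + (x3 - x23) * A u2 u3 < T := by
    rw [hT]; nlinarith [hAu.1]
  have hL2 : T < (x23 - x2) * A u2 u3 + (x3 - x23) * u3 := by
    rw [hT]; nlinarith [hAu.2]
  obtain ⟨w1, hw1lt, hw1I⟩ := ((lim1.eventually_lt_const hL1).and hIooEv1).exists
  obtain ⟨w2, hw2gt, hw2I⟩ := ((lim2.eventually_const_lt hL2).and hIooEv2).exists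
  have hw12 : w1 < w2 := by
    by_contra h
    push_neg at h
    rcases eq_or_lt_of_le h with h | h
    · rw [h] at hw2gt; linarith
    · have := gmono w2 hw2I w1 hw1I h; linarith
  have hsub : Icc w1 w2 ⊆ Ioo u2 u3 := Icc_subset_Ioo hw1I.1 hw2I.2
  have hgc : ContinuousOn g (Icc w1 w2) := by
    intro w hw
    have hwI := hsub hw
    have h1 : D u2 < D w := hmono ⟨le_rfl, h23.le⟩ ⟨hwI.1.le, hwI.2.le⟩ hwI.1
    have h2 : D w < D u3 := hmono ⟨hwI.1.le, hwI.2.le⟩ ⟨h23.le, le_rfl⟩ hwI.2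
    have hca : ContinuousAt g w := by
      apply ContinuousAt.add
      · exact (hcont1 w h1).const_mul _
      · exact (hcont2 w h2).const_mul _
    exact hca.continuousWithinAt
  obtain ⟨w, hwmem, hgw⟩ := intermediate_value_Ioo hw12.le hgc ⟨hw1lt, hw2gt⟩
  have hwI : w ∈ Ioo u2 u3 := hsub (Ioo_subset_Icc_self hwmem)
  have key : ∀ y ∈ Ioo u2 u3,
      ((x23 - x2) * nlAvg f u2 y + (x3 - x23) * nlAvg f y u3
        = (x3 - x2) * nlAvg f u2 u3) ↔ g y = T := by
    intro y hy
    rw [hnl u2 y hy.1.ne, hnl y u3 hy.2.ne, hnl u2 u3 h23.ne, hg, hT]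
  refine ⟨w, ⟨hwI, (key w hwI).mpr hgw⟩, ?_⟩
  intro y ⟨hyI, hyeq⟩
  have hgy : g y = T := (key y hyI).mp hyeq
  rcases lt_trichotomy y w with h | h | h
  · have := gmono y hyI w hwI h; rw [hgy, hgw] at this; linarith
  · exact h
  · have := gmono w hwI y hyI h; rw [hgy, hgw] at this; linarith
end

section
/- Let n ≥ 2, let u : Fin n → ℝ be a finite sequence of particle values, let 0 ≤ i < n−1, and let w ∈ ℝ with min(u_i, u_{i+1}) ≤ w ≤ max(u_i, u_{i+1}). Let v : Fin (n−1) → ℝ be the sequence obtained from u by replacing the two consecutive entries u_i, u_{i+1} with the single entry w. Then the total variation of v is at most that of u: ∑_{j=0}^{n-3} |v_{j+1} − v_j| ≤ ∑_{j=0}^{n-2} |u_{j+1} − u_j|. -/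
/-- Key combinatorial lemma on `ℕ`-indexed sums: if `g` agrees with `f` below `i - 1`,
agrees with a shift of `f` above `i`, and the two "boundary" terms of `g` are controlled
by the corresponding terms of `f` plus pieces `c`, `d` with `c + d ≤ f i`, then the sum of
`g` over `range (m - 1)` is at most the sum of `f` over `range m`. -/
lemma tv_key (m i : ℕ) (hi : i < m) (f g : ℕ → ℝ) (c d : ℝ)
    (hf : ∀ j, j < m → 0 ≤ f j) (hc : 0 ≤ c) (hd : 0 ≤ d)
    (hcd : c + d ≤ f i)
    (h1 : ∀ j, j + 1 < i → g j = f j)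
    (h2 : ∀ j, i < j → j + 1 < m → g j = f (j + 1))
    (h3 : ∀ t, i = t + 1 → g t ≤ f t + c)
    (h4 : i + 1 < m → g i ≤ f (i + 1) + d) :
    ∑ j ∈ Finset.range (m - 1), g j ≤ ∑ j ∈ Finset.range m, f j := by
  have hA : ∑ j ∈ Finset.range i, g j ≤ (∑ j ∈ Finset.range i, f j) + c := by
    cases i with
    | zero => simpa using hc
    | succ t =>
      rw [Finset.sum_range_succ, Finset.sum_range_succ]
      have he : ∑ j ∈ Finset.range t, g j = ∑ j ∈ Finset.range t, f j := by
        refine Finset.sum_congr rfl fun j hj => ?_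
        exact h1 j (by simp only [Finset.mem_range] at hj; omega)
      have := h3 t rfl
      linarith
  rcases Nat.lt_or_ge (i + 1) m with hm | hm
  · -- i + 1 < m
    obtain ⟨k, hk⟩ : ∃ k, m = i + k + 2 := ⟨m - i - 2, by omega⟩
    subst hk
    have h4' := h4 (by omega)
    have e1 : i + k + 2 - 1 = i + (k + 1) := by omega
    rw [e1, Finset.sum_range_add g i (k + 1)]
    rw [show i + k + 2 = i + (k + 2) by omega, Finset.sum_range_add f i (k + 2)]
    have eg : ∑ j ∈ Finset.range (k + 1), g (i + j)
        = g i + ∑ j ∈ Finset.range k, f (i + 2 + j) := by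
      rw [show k + 1 = 1 + k by omega, Finset.sum_range_add (fun j => g (i + j)) 1 k]
      simp only [Finset.sum_range_one, add_zero]
      congr 1
      refine Finset.sum_congr rfl fun j hj => ?_
      simp only [Finset.mem_range] at hj
      rw [h2 (i + (1 + j)) (by omega) (by omega)]
      congr 1
      omega
    have ef : ∑ j ∈ Finset.range (k + 2), f (i + j)
        = f i + (f (i + 1) + ∑ j ∈ Finset.range k, f (i + 2 + j)) := by
      rw [show k + 2 = 2 + k by omega, Finset.sum_range_add (fun j => f (i + j)) 2 k]
      have : ∑ j ∈ Finset.range 2, f (i + j) = f i + f (i + 1) := by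
        simp [Finset.sum_range_succ]
      rw [this]
      have : ∑ j ∈ Finset.range k, f (i + (2 + j)) = ∑ j ∈ Finset.range k, f (i + 2 + j) := by
        refine Finset.sum_congr rfl fun j _ => ?_
        congr 1
        omega
      rw [this]
      ring
    rw [eg, ef]
    linarith
  · -- m = i + 1
    have hmi : m = i + 1 := by omega
    subst hmi
    have : i + 1 - 1 = i := by omega
    rw [this, Finset.sum_range_succ]
    have := hf i (by omega)
    linarith

/-- Merging two consecutive particle values `u_i`, `u_{i+1}` into a single value `w`
between them does not increase the total variation of the sequence. -/
theorem merge_totalVariation_le (n : ℕ) (hn : 2 ≤ n) (u : Fin n → ℝ)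
    (i : ℕ) (hi : i < n - 1) (w : ℝ)
    (hw1 : min (u ⟨i, by omega⟩) (u ⟨i + 1, by omega⟩) ≤ w)
    (hw2 : w ≤ max (u ⟨i, by omega⟩) (u ⟨i + 1, by omega⟩))
    (v : Fin (n - 1) → ℝ)
    (hv_lt : ∀ j : Fin (n - 1), (j : ℕ) < i → v j = u ⟨j, by have := j.isLt; omega⟩)
    (hv_eq : v ⟨i, hi⟩ = w)
    (hv_gt : ∀ j : Fin (n - 1), i < (j : ℕ) → v j = u ⟨(j : ℕ) + 1, by have := j.isLt; omega⟩) :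
    ∑ j : Fin (n - 2), |v ⟨(j : ℕ) + 1, by have := j.isLt; omega⟩
        - v ⟨(j : ℕ), by have := j.isLt; omega⟩|
      ≤ ∑ j : Fin (n - 1), |u ⟨(j : ℕ) + 1, by have := j.isLt; omega⟩
        - u ⟨(j : ℕ), by have := j.isLt; omega⟩| := by
  classical
  set U : ℕ → ℝ := fun j => if h : j < n then u ⟨j, h⟩ else 0 with hU
  set V : ℕ → ℝ := fun j => if h : j < n - 1 then v ⟨j, h⟩ else 0 with hV
  set f : ℕ → ℝ := fun j => |U (j + 1) - U j| with hfdef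
  set g : ℕ → ℝ := fun j => |V (j + 1) - V j| with hgdef
  have hUe : ∀ (j : ℕ) (h : j < n), U j = u ⟨j, h⟩ := fun j h => dif_pos h
  have hVe : ∀ (j : ℕ) (h : j < n - 1), V j = v ⟨j, h⟩ := fun j h => dif_pos h
  -- rewrite both sides as range sums
  have hL : ∑ j : Fin (n - 2), |v ⟨(j : ℕ) + 1, by have := j.isLt; omega⟩
        - v ⟨(j : ℕ), by have := j.isLt; omega⟩| = ∑ j ∈ Finset.range (n - 2), g j := by
    rw [← Fin.sum_univ_eq_sum_range g (n - 2)]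
    refine Finset.sum_congr rfl fun j _ => ?_
    have hj1 : (j : ℕ) + 1 < n - 1 := by have := j.isLt; omega
    have hj2 : (j : ℕ) < n - 1 := by omega
    simp only [hgdef, hVe _ hj1, hVe _ hj2]
  have hR : ∑ j : Fin (n - 1), |u ⟨(j : ℕ) + 1, by have := j.isLt; omega⟩
        - u ⟨(j : ℕ), by have := j.isLt; omega⟩| = ∑ j ∈ Finset.range (n - 1), f j := by
    rw [← Fin.sum_univ_eq_sum_range f (n - 1)]
    refine Finset.sum_congr rfl fun j _ => ?_
    have hj1 : (j : ℕ) + 1 < n := by have := j.isLt; omega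
    have hj2 : (j : ℕ) < n := by omega
    simp only [hfdef, hUe _ hj1, hUe _ hj2]
  rw [hL, hR]
  have hin : i < n := by omega
  have hi1n : i + 1 < n := by omega
  have hUi : U i = u ⟨i, by omega⟩ := hUe i hin
  have hUi1 : U (i + 1) = u ⟨i + 1, by omega⟩ := hUe (i + 1) hi1n
  have hw1' : min (U i) (U (i + 1)) ≤ w := by rw [hUi, hUi1]; exact hw1
  have hw2' : w ≤ max (U i) (U (i + 1)) := by rw [hUi, hUi1]; exact hw2
  have hmm : n - 1 - 1 = n - 2 := by omega
  rw [← hmm]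
  refine tv_key (n - 1) i hi f g |w - U i| |U (i + 1) - w|
    (fun j _ => abs_nonneg _) (abs_nonneg _) (abs_nonneg _) ?_ ?_ ?_ ?_ ?_
  · -- |w - U i| + |U (i+1) - w| ≤ f i
    simp only [hfdef]
    rcases le_total (U i) (U (i + 1)) with h | h
    · have hlo : U i ≤ w := by rw [min_eq_left h] at hw1'; exact hw1'
      have hhi : w ≤ U (i + 1) := by rw [max_eq_right h] at hw2'; exact hw2'
      rw [abs_of_nonneg (by linarith), abs_of_nonneg (by linarith),
        abs_of_nonneg (by linarith)]
      linarith
    · have hlo : U (i + 1) ≤ w := by rw [min_eq_right h] at hw1'; exact hw1'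
      have hhi : w ≤ U i := by rw [max_eq_left h] at hw2'; exact hw2'
      rw [abs_of_nonpos (by linarith), abs_of_nonpos (by linarith),
        abs_of_nonpos (by linarith)]
      linarith
  · -- below i - 1 : g = f
    intro j hj
    have hj1 : j + 1 < n - 1 := by omega
    have hj2 : j < n - 1 := by omega
    simp only [hgdef, hfdef, hVe _ hj1, hVe _ hj2,
      hv_lt ⟨j + 1, hj1⟩ (by simpa using hj), hv_lt ⟨j, hj2⟩ (by simp; omega),
      hUe _ (by omega : j + 1 < n), hUe _ (by omega : j < n)]
  · -- above i : g j = f (j + 1)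
    intro j hij hj
    have hj1 : j + 1 < n - 1 := by omega
    have hj2 : j < n - 1 := by omega
    have e1 : v ⟨j + 1, hj1⟩ = u ⟨j + 2, by omega⟩ := hv_gt ⟨j + 1, hj1⟩ (by simp; omega)
    have e2 : v ⟨j, hj2⟩ = u ⟨j + 1, by omega⟩ := hv_gt ⟨j, hj2⟩ (by simpa using hij)
    simp only [hgdef, hfdef, hVe _ hj1, hVe _ hj2, e1, e2,
      hUe _ (by omega : j + 1 + 1 < n), hUe _ (by omega : j + 1 < n)]
  · -- boundary below
    intro t ht
    subst ht
    have hj1 : t + 1 < n - 1 := hi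
    have hj2 : t < n - 1 := by omega
    have e1 : v ⟨t + 1, hj1⟩ = w := hv_eq
    have e2 : v ⟨t, hj2⟩ = u ⟨t, by omega⟩ := hv_lt ⟨t, hj2⟩ (by simp)
    have : g t = |w - U t| := by
      simp only [hgdef, hVe _ hj1, hVe _ hj2, e1, e2, hUe _ (by omega : t < n)]
    rw [this]
    have hft : f t = |U (t + 1) - U t| := rfl
    calc |w - U t| ≤ |w - U (t + 1)| + |U (t + 1) - U t| := abs_sub_le _ _ _
      _ = f t + |w - U (t + 1)| := by rw [hft]; ring
  · -- boundary above
    intro hm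
    have hj1 : i + 1 < n - 1 := by omega
    have hj2 : i < n - 1 := hi
    have e1 : v ⟨i + 1, hj1⟩ = u ⟨i + 2, by omega⟩ := hv_gt ⟨i + 1, hj1⟩ (by simp)
    have e2 : v ⟨i, hj2⟩ = w := hv_eq
    have : g i = |U (i + 2) - w| := by
      simp only [hgdef, hVe _ hj1, hVe _ hj2, e1, e2, hUe _ (by omega : i + 2 < n)]
    rw [this]
    have hft : f (i + 1) = |U (i + 2) - U (i + 1)| := rfl
    calc |U (i + 2) - w| ≤ |U (i + 2) - U (i + 1)| + |U (i + 1) - w| := abs_sub_le _ _ _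
      _ = f (i + 1) + |U (i + 1) - w| := by rw [hft]
end

section
/- Let a < c ≤ b be real numbers, k ∈ ℝ, and let u, v : [a, b] → ℝ be integrable functions such that ∫_a^b u(x) dx = ∫_a^b v(x) dx, u(x) ≥ k and v(x) ≥ k for almost every x ∈ [a, c], and u(x) ≤ v(x) for almost every x ∈ [c, b]. Then ∫_a^b |u(x) − k| dx ≥ ∫_a^b |v(x) − k| dx. -/
open Set MeasureTheory

/-- Key entropy inequality for merging: if `u` and `v` have the same integral over
`[a,b]`, both lie above `k` on `[a,c]`, and `u ≤ v` on `[c,b]`, then the Kruzkov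
entropy `∫ |· − k|` of `v` is at most that of `u`. -/
theorem entropy_merge_inequality (a b c k : ℝ) (hac : a < c) (hcb : c ≤ b)
    (u v : ℝ → ℝ)
    (hu : IntegrableOn u (Icc a b) volume)
    (hv : IntegrableOn v (Icc a b) volume)
    (harea : ∫ x in a..b, u x = ∫ x in a..b, v x)
    (hleft : ∀ᵐ x ∂volume, x ∈ Icc a c → k ≤ u x ∧ k ≤ v x)
    (hright : ∀ᵐ x ∂volume, x ∈ Icc c b → u x ≤ v x) :
    ∫ x in a..b, |v x - k| ≤ ∫ x in a..b, |u x - k| := by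
  have hac' : a ≤ c := hac.le
  have hab : a ≤ b := hac'.trans hcb
  have hconst : IntegrableOn (fun _ : ℝ => k) (Icc a b) volume :=
    (integrableOn_const_iff).mpr (Or.inr measure_Icc_lt_top)
  have huabs : IntegrableOn (fun x => |u x - k|) (Icc a b) volume := (hu.sub hconst).abs
  have hvabs : IntegrableOn (fun x => |v x - k|) (Icc a b) volume := (hv.sub hconst).abs
  have mkII : ∀ (f : ℝ → ℝ), IntegrableOn f (Icc a b) volume →
      IntervalIntegrable f volume a c ∧ IntervalIntegrable f volume c b := by
    intro f hf
    constructor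
    · apply IntegrableOn.intervalIntegrable
      rw [uIcc_of_le hac']
      exact hf.mono_set (Icc_subset_Icc le_rfl hcb)
    · apply IntegrableOn.intervalIntegrable
      rw [uIcc_of_le hcb]
      exact hf.mono_set (Icc_subset_Icc hac' le_rfl)
  obtain ⟨huac, hucb⟩ := mkII u hu
  obtain ⟨hvac, hvcb⟩ := mkII v hv
  obtain ⟨huaac, huacb⟩ := mkII _ huabs
  obtain ⟨hvaac, hvacb⟩ := mkII _ hvabs
  -- split integrals
  have splitu : (∫ x in a..c, u x) + ∫ x in c..b, u x = ∫ x in a..b, u x :=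
    intervalIntegral.integral_add_adjacent_intervals huac hucb
  have splitv : (∫ x in a..c, v x) + ∫ x in c..b, v x = ∫ x in a..b, v x :=
    intervalIntegral.integral_add_adjacent_intervals hvac hvcb
  have splituabs : (∫ x in a..c, |u x - k|) + ∫ x in c..b, |u x - k| = ∫ x in a..b, |u x - k| :=
    intervalIntegral.integral_add_adjacent_intervals huaac huacb
  have splitvabs : (∫ x in a..c, |v x - k|) + ∫ x in c..b, |v x - k| = ∫ x in a..b, |v x - k| :=
    intervalIntegral.integral_add_adjacent_intervals hvaac hvacb
  -- on [a,c], |⋅ - k| = ⋅ - k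
  have e1 : ∫ x in a..c, |v x - k| = (∫ x in a..c, v x) - (c - a) * k := by
    have : ∫ x in a..c, |v x - k| = ∫ x in a..c, (v x - k) := by
      apply intervalIntegral.integral_congr_ae
      filter_upwards [hleft] with x hx hx'
      rw [uIoc_of_le hac'] at hx'
      have := (hx (Ioc_subset_Icc_self hx')).2
      rw [abs_of_nonneg (by linarith)]
    rw [this, intervalIntegral.integral_sub hvac intervalIntegrable_const,
      intervalIntegral.integral_const, smul_eq_mul]
  have e2 : ∫ x in a..c, |u x - k| = (∫ x in a..c, u x) - (c - a) * k := by
    have : ∫ x in a..c, |u x - k| = ∫ x in a..c, (u x - k) := by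
      apply intervalIntegral.integral_congr_ae
      filter_upwards [hleft] with x hx hx'
      rw [uIoc_of_le hac'] at hx'
      have := (hx (Ioc_subset_Icc_self hx')).1
      rw [abs_of_nonneg (by linarith)]
    rw [this, intervalIntegral.integral_sub huac intervalIntegrable_const,
      intervalIntegral.integral_const, smul_eq_mul]
  -- on [c,b], |v - k| ≤ |u - k| + (v - u)
  have e3 : ∫ x in c..b, |v x - k| ≤
      ∫ x in c..b, (|u x - k| + (v x - u x)) := by
    apply intervalIntegral.integral_mono_ae_restrict hcb hvacb (huacb.add (hvcb.sub hucb))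
    have h1 := (ae_restrict_iff' (measurableSet_Icc : MeasurableSet (Icc c b))).mpr hright
    filter_upwards [h1] with x huv
    have : |v x - k| ≤ |u x - k| + |v x - u x| := by
      have := abs_add_le (u x - k) (v x - u x)
      simpa using this
    calc |v x - k| ≤ |u x - k| + |v x - u x| := this
      _ = |u x - k| + (v x - u x) := by
            rw [abs_of_nonneg (show (0:ℝ) ≤ v x - u x by linarith)]
  have e4 : ∫ x in c..b, (|u x - k| + (v x - u x)) =
      (∫ x in c..b, |u x - k|) + ((∫ x in c..b, v x) - ∫ x in c..b, u x) := by
    rw [intervalIntegral.integral_add huacb (hvcb.sub hucb),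
      intervalIntegral.integral_sub hvcb hucb]
  linarith
end
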